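/- Let G be a finite group, R a commutative ring, and φ : G → R^×. The rank-1 module R_φ is a direct summand of a finite direct sum of permutation modules R(G/H) (H ranging over subgroups of G) if and only if R = Σ_{H ≤ G} [G:H]·(I^φ_H)², where I^φ_H is the annihilator ideal of {1 − φ(h) : h ∈ H}. -/

import Mathlib

/-- The ideal `I^φ_H = {r ∈ R : (1 - φ(h))·r = 0 for all h ∈ H}`, the annihilator of
`{1 - φ(h) : h ∈ H}`. -/
def Iphi {R : Type*} [CommRing R] {G : Type*} [Group G] (φ : G →* Rˣ) (H : Subgroup G) :
    Ideal R where
  carrier := {r : R | ∀ h ∈ H, (1 - ((φ h : Rˣ) : R)) * r = 0}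
  add_mem' := by
    intro a b ha hb h hh
    rw [mul_add, ha h hh, hb h hh, add_zero]
  zero_mem' := by intro h hh; rw [mul_zero]
  smul_mem' := by
    intro c r hr h hh
    simp only [smul_eq_mul]
    rw [mul_comm c r, ← mul_assoc, hr h hh, zero_mul]

/-- `R_φ` is a direct summand of a permutation `RG`-module: there are finitely many
subgroups `H i` of `G`, `RG`-module maps `f i : R_φ → R(G/H i)` (encoded by the images
`x i` of `1 ∈ R_φ`, which must be `φ`-semi-invariant) and `RG`-module maps
`g i : R(G/H i) → R_φ` (i.e. `R`-linear maps satisfying `g (s • m) = φ(s)·g m`) whose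
composite `∑ i, g i ∘ f i` is the identity of `R_φ`. -/
def IsPermSummand (R : Type*) [CommRing R] (G : Type*) [Group G] (φ : G →* Rˣ) : Prop :=
  ∃ (n : ℕ) (Hs : Fin n → Subgroup G)
    (x : ∀ i, (G ⧸ Hs i) →₀ R)
    (g : ∀ i, ((G ⧸ Hs i) →₀ R) →ₗ[R] R),
    (∀ i (s : G), ((Representation.ofMulAction R G (G ⧸ Hs i)) s (MonoidAlgebra.ofCoeff (x i))).coeff = ((φ s : Rˣ) : R) • x i) ∧
    (∀ i (s : G) (m : (G ⧸ Hs i) →₀ R),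
      g i ((Representation.ofMulAction R G (G ⧸ Hs i)) s (MonoidAlgebra.ofCoeff m)).coeff = ((φ s : Rˣ) : R) * g i m) ∧
    (∑ i, g i (x i)) = 1

/-! A map `R_φ → R(G/H)` is a function `x` on `G/H` with `x(t·c) = φ(t)⁻¹ x(c)`, and a map
`g : R(G/H) → R_φ` is determined by the function `b(c) = g(δ_c)`, which satisfies
`b(t·c) = φ(t) b(c)`. Such twisted functions are determined by their value at the coset `H`,
which can be any element of `I^φ_H`. The composite is multiplication by
`∑_c x(c) b(c) = [G:H] x(H) b(H)`, the summand being `G`-invariant. So these scalars generate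
exactly `Σ_H [G:H] (I^φ_H)²`, and `R_φ` is a summand iff `1` lies in the ideal they generate. -/

open Finsupp

section Twisted

variable {R : Type*} [CommRing R] {G : Type*} [Group G] {X : Type*} [MulAction G X]

def IsSemiInvariant (φ : G →* Rˣ) (x : X →₀ R) : Prop :=
  ∀ s : G, ((Representation.ofMulAction R G X) s (MonoidAlgebra.ofCoeff x)).coeff =
    ((φ s : Rˣ) : R) • x

def IsSemiEquivariant (φ : G →* Rˣ) (g : (X →₀ R) →ₗ[R] R) : Prop :=
  ∀ (s : G) (m : X →₀ R),
    g ((Representation.ofMulAction R G X) s (MonoidAlgebra.ofCoeff m)).coeff =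
      ((φ s : Rˣ) : R) * g m

/-- `f` is a `G`-map from `X` to `R_ψ`. -/
def IsTwistedEquivariant (ψ : G →* Rˣ) (f : X → R) : Prop :=
  ∀ (s : G) (c : X), f (s • c) = ψ s * f c

lemma mem_Iphi_iff {ψ : G →* Rˣ} {H : Subgroup G} {r : R} :
    r ∈ Iphi ψ H ↔ ∀ h ∈ H, ψ h * r = r := by
  refine forall₂_congr fun h _ => ?_
  rw [sub_mul, one_mul, sub_eq_zero, eq_comm]

lemma Iphi_inv (φ : G →* Rˣ) (H : Subgroup G) : Iphi φ⁻¹ H = Iphi φ H := by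
  ext r
  simp only [mem_Iphi_iff, MonoidHom.inv_apply]
  exact forall₂_congr fun h _ => (Units.inv_mul_eq_iff_eq_mul _).trans eq_comm

lemma isSemiInvariant_iff {φ : G →* Rˣ} {x : X →₀ R} :
    IsSemiInvariant φ x ↔ IsTwistedEquivariant φ⁻¹ x := by
  have hpointwise : IsSemiInvariant φ x ↔ ∀ (s : G) (c : X), x (s⁻¹ • c) = φ s * x c := by
    simp only [IsSemiInvariant, Finsupp.ext_iff, Representation.coeff_ofMulAction,
      Finsupp.smul_apply]
    rfl
  rw [hpointwise]
  exact ⟨fun h s c => by simpa using h s⁻¹ c, fun h s c => by simpa using h s⁻¹ c⟩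

lemma isSemiEquivariant_iff {φ : G →* Rˣ} {g : (X →₀ R) →ₗ[R] R} :
    IsSemiEquivariant φ g ↔ IsTwistedEquivariant φ fun c => g (single c 1) := by
  refine ⟨fun h s c => ?_, fun h s m => ?_⟩
  · simpa [Representation.ofMulAction_single] using h s (single c 1)
  · induction m using Finsupp.induction_linear with
    | zero => simp
    | add a b ha hb =>
      simp only [MonoidAlgebra.ofCoeff_add, map_add, MonoidAlgebra.coeff_add, ha, hb, mul_add]
    | single c r =>
      have hc : g (single (s • c) 1) = φ s * g (single c 1) := h s c
      rw [MonoidAlgebra.ofCoeff_single, Representation.ofMulAction_single,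
        MonoidAlgebra.coeff_single, ← smul_single_one (s • c), ← smul_single_one c, map_smul,
        map_smul, hc, smul_eq_mul, smul_eq_mul, mul_left_comm]

namespace IsTwistedEquivariant

variable {ψ χ : G →* Rˣ} {f b : X → R}

lemma mem_Iphi (hf : IsTwistedEquivariant ψ f) (c : X) :
    f c ∈ Iphi ψ (MulAction.stabilizer G c) :=
  mem_Iphi_iff.mpr fun h hh => by rw [← hf h c, MulAction.mem_stabilizer_iff.mp hh]

lemma mul (hf : IsTwistedEquivariant ψ f) (hb : IsTwistedEquivariant χ b) :
    IsTwistedEquivariant (ψ * χ) (f * b) := fun s c => by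
  simp only [Pi.mul_apply, hf s c, hb s c, MonoidHom.mul_apply, Units.val_mul]
  ring

end IsTwistedEquivariant

lemma sum_eq_index_mul_of_isTwistedEquivariant_one {H : Subgroup G} [Fintype (G ⧸ H)]
    {f : G ⧸ H → R} (hf : IsTwistedEquivariant (1 : G →* Rˣ) f) :
    ∑ c, f c = H.index * f (1 : G) := by
  have hconst : ∀ c : G ⧸ H, f c = f (1 : G) := fun c => by
    induction c using QuotientGroup.induction_on with
    | H t => simpa using hf t ((1 : G) : G ⧸ H)
  rw [Finset.sum_congr rfl fun c _ => hconst c, Finset.sum_const, Finset.card_univ,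
    nsmul_eq_mul, H.index_eq_card, Nat.card_eq_fintype_card]

lemma exists_isTwistedEquivariant_of_mem_Iphi {ψ : G →* Rˣ} {H : Subgroup G} {u : R}
    (hu : u ∈ Iphi ψ H) : ∃ f : G ⧸ H → R, IsTwistedEquivariant ψ f ∧ f (1 : G) = u := by
  refine ⟨fun c => Quotient.liftOn' c (fun s => ψ s * u) fun s t hst => ?_, fun s c => ?_, ?_⟩
  · rw [show t = s * (s⁻¹ * t) by group, map_mul, Units.val_mul, mul_assoc,
      mem_Iphi_iff.mp hu _ (QuotientGroup.leftRel_apply.mp hst)]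
  · induction c using QuotientGroup.induction_on with
    | H t =>
      rw [MulAction.Quotient.smul_mk]
      simp only [Quotient.liftOn'_mk'', smul_eq_mul, map_mul, Units.val_mul, mul_assoc]
  · simp

end Twisted

lemma LinearMap.apply_eq_sum_mul_apply_single {R X : Type*} [CommRing R] [Fintype X]
    (g : (X →₀ R) →ₗ[R] R) (x : X →₀ R) : g x = ∑ c, x c * g (Finsupp.single c 1) := by
  conv_lhs => rw [← Finsupp.univ_sum_single x]
  simp only [map_sum]
  refine Finset.sum_congr rfl fun c _ => ?_
  rw [← smul_single_one, map_smul, smul_eq_mul]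

section Quotient

variable {R : Type*} [CommRing R] {G : Type*} [Group G] {φ : G →* Rˣ} {H : Subgroup G}
  [Finite (G ⧸ H)]

lemma IsSemiEquivariant.apply_mem_of_isSemiInvariant {x : G ⧸ H →₀ R}
    {g : (G ⧸ H →₀ R) →ₗ[R] R} (hg : IsSemiEquivariant φ g) (hx : IsSemiInvariant φ x) :
    g x ∈ Ideal.span {(H.index : R)} * Iphi φ H ^ 2 := by
  have := Fintype.ofFinite (G ⧸ H)
  rw [isSemiInvariant_iff] at hx
  rw [isSemiEquivariant_iff] at hg
  have hx1 : x (1 : G) ∈ Iphi φ H := by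
    simpa [Iphi_inv] using hx.mem_Iphi ((1 : G) : G ⧸ H)
  have hg1 : g (single (1 : G) 1) ∈ Iphi φ H := by
    simpa using hg.mem_Iphi ((1 : G) : G ⧸ H)
  have hsum := sum_eq_index_mul_of_isTwistedEquivariant_one (inv_mul_cancel φ ▸ hx.mul hg)
  simp only [Pi.mul_apply] at hsum
  rw [g.apply_eq_sum_mul_apply_single, hsum]
  exact Ideal.mul_mem_mul (Ideal.mem_span_singleton_self _)
    (pow_two (Iphi φ H) ▸ Ideal.mul_mem_mul hx1 hg1)

lemma exists_isSemiInvariant_apply_eq {u v : R} (hu : u ∈ Iphi φ H) (hv : v ∈ Iphi φ H) :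
    ∃ (x : G ⧸ H →₀ R) (g : (G ⧸ H →₀ R) →ₗ[R] R),
      IsSemiInvariant φ x ∧ IsSemiEquivariant φ g ∧ g x = H.index * (u * v) := by
  have := Fintype.ofFinite (G ⧸ H)
  obtain ⟨f, hf, hf1⟩ := exists_isTwistedEquivariant_of_mem_Iphi (Iphi_inv φ H ▸ hu)
  obtain ⟨b, hb, hb1⟩ := exists_isTwistedEquivariant_of_mem_Iphi hv
  refine ⟨equivFunOnFinite.symm f, linearCombination R b, isSemiInvariant_iff.mpr ?_,
    isSemiEquivariant_iff.mpr ?_, ?_⟩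
  · simpa using hf
  · simpa using hb
  · have hsum := sum_eq_index_mul_of_isTwistedEquivariant_one (inv_mul_cancel φ ▸ hf.mul hb)
    simp only [Pi.mul_apply, hf1, hb1] at hsum
    rw [LinearMap.apply_eq_sum_mul_apply_single]
    simpa using hsum

end Quotient

section Pairings

variable {R : Type*} [CommRing R] {G : Type*} [Group G] {φ : G →* Rˣ}

lemma IsSemiEquivariant.smul {X : Type*} [MulAction G X] {g : (X →₀ R) →ₗ[R] R}
    (hg : IsSemiEquivariant φ g) (c : R) : IsSemiEquivariant φ (c • g) := fun s m => by
  simp only [LinearMap.smul_apply, smul_eq_mul, hg s m, mul_left_comm]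

/-- The scalars by which the composites `R_φ → R(G/H) → R_φ` act on `R_φ`. -/
def semiInvariantPairings (φ : G →* Rˣ) : Set R :=
  {r | ∃ (H : Subgroup G) (x : G ⧸ H →₀ R) (g : (G ⧸ H →₀ R) →ₗ[R] R),
    IsSemiInvariant φ x ∧ IsSemiEquivariant φ g ∧ g x = r}

lemma isPermSummand_iff_one_mem_span :
    IsPermSummand R G φ ↔ (1 : R) ∈ Ideal.span (semiInvariantPairings φ) := by
  constructor
  · rintro ⟨n, Hs, x, g, hx, hg, hsum⟩
    rw [← hsum]
    exact Ideal.sum_mem _ fun i _ => Ideal.subset_span ⟨Hs i, x i, g i, hx i, hg i, rfl⟩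
  · intro h
    obtain ⟨n, c, r, hr⟩ := Submodule.mem_span_set'.mp h
    choose Hs x g hx hg hgx using fun i => (r i).2
    refine ⟨n, Hs, x, fun i => c i • g i, hx, fun i => (hg i).smul (c i), ?_⟩
    simpa [hgx] using hr

lemma span_semiInvariantPairings [Finite G] :
    Ideal.span (semiInvariantPairings φ) =
      ⨆ H : Subgroup G, Ideal.span {(H.index : R)} * Iphi φ H ^ 2 := by
  refine le_antisymm (Ideal.span_le.mpr ?_) (iSup_le fun H => ?_)
  · rintro _ ⟨H, x, g, hx, hg, rfl⟩
    exact Submodule.mem_iSup_of_mem H (hg.apply_mem_of_isSemiInvariant hx)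
  · refine Ideal.span_singleton_mul_le_iff.mpr fun z hz => ?_
    rw [pow_two] at hz
    refine Submodule.mul_induction_on hz (fun u hu v hv => ?_)
      fun p q hp hq => mul_add (H.index : R) p q ▸ add_mem hp hq
    obtain ⟨x, g, hx, hg, hgx⟩ := exists_isSemiInvariant_apply_eq hu hv
    exact Ideal.subset_span ⟨H, x, g, hx, hg, hgx⟩

end Pairings

/-- `R_φ` is a direct summand of a permutation `RG`-module if and only if
`R = Σ_{H ≤ G} [G:H]·(I^φ_H)²`. -/
theorem stmt5 (R : Type*) [CommRing R] (G : Type*) [Group G] [Finite G] (φ : G →* Rˣ) :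
    IsPermSummand R G φ ↔
      (⨆ H : Subgroup G, Ideal.span {((H.index : ℕ) : R)} * (Iphi φ H) ^ 2) = ⊤ := by
  rw [isPermSummand_iff_one_mem_span, span_semiInvariantPairings, Ideal.eq_top_iff_one]
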